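/- For every p ∈ (0,1)^n, every pseudo-Boolean function f, and every S ⊆ N, Φ_{B,p}(f,S) = Σ_{T⊆N∖S} p_T^S (f(T∪S) − f(T)), where p_T^S = Π_{i∈T} p_i · Π_{i∈N∖(S∪T)}(1−p_i); moreover p_T^S ≥ 0 and Σ_{T⊆N∖S} p_T^S = 1. -/

import Mathlib

open Finset

/-- The Möbius transform `a(T) = Σ_{R⊆T}(−1)^{|T|−|R|} f(R)`. -/
noncomputable def moebius {n : ℕ} (f : Finset (Fin n) → ℝ) (T : Finset (Fin n)) : ℝ :=
  ∑ R ∈ T.powerset, (-1 : ℝ) ^ (T.card - R.card) * f R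

/-- The weighted Banzhaf influence index (Möbius form):
`Φ_{B,p}(f,S) = Σ_{T⊆N, T∩S≠∅} a(T) Π_{i∈T∖S} p_i`. -/
noncomputable def wBanzhafInfluence {n : ℕ} (p : Fin n → ℝ) (f : Finset (Fin n) → ℝ)
    (S : Finset (Fin n)) : ℝ :=
  ∑ T ∈ (univ : Finset (Finset (Fin n))).filter (fun T => (T ∩ S).Nonempty),
    moebius f T * ∏ i ∈ T \ S, p i

/-- The coefficients `p_T^S = Π_{i∈T} p_i · Π_{i∈N∖(S∪T)}(1−p_i)`. -/
noncomputable def pTS {n : ℕ} (p : Fin n → ℝ) (S T : Finset (Fin n)) : ℝ :=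
  (∏ i ∈ T, p i) * ∏ i ∈ univ \ (S ∪ T), (1 - p i)

/-!
For `T ⊆ N ∖ S` the coefficients `p_T^S` are the probabilities of the product Bernoulli(`p`)
measure on subsets of `N ∖ S`, so the probability of the event `B ⊆ T` is `∏_{i∈B} p_i`.
Replacing `∏_{i∈U∖S} p_i` in `Φ_{B,p}(f,S)` by this probability and exchanging the two sums, the
coefficient of `p_T^S` becomes the sum of `a(U)` over the `U ⊆ T ∪ S` meeting `S`, which by Möbius
inversion is `f(T ∪ S) − f(T)`.
-/

namespace Finset

variable {α : Type*} [DecidableEq α]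

theorem sum_Icc_eq_sum_powerset_sdiff {M : Type*} [AddCommMonoid M] {B A : Finset α}
    (h : B ⊆ A) (g : Finset α → M) :
    ∑ T ∈ Icc B A, g T = ∑ T ∈ (A \ B).powerset, g (B ∪ T) := by
  rw [Icc_eq_image_powerset h, sum_image]
  intro T hT T' hT' hTT'
  have hd : ∀ {U}, U ∈ ((A \ B).powerset : Set (Finset α)) → Disjoint B U := fun hU =>
    disjoint_of_subset_right (mem_powerset.mp hU) disjoint_sdiff
  simp only at hTT'
  rw [← union_sdiff_cancel_left (hd hT), hTT', union_sdiff_cancel_left (hd hT')]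

theorem sum_Icc_neg_one_pow_card_sub {R : Type*} [Ring R] {B A : Finset α} (h : B ⊆ A) :
    ∑ T ∈ Icc B A, (-1 : R) ^ (#T - #B) = if B = A then 1 else 0 := by
  have hcard : ∀ T ∈ (A \ B).powerset, #(B ∪ T) - #B = #T := fun T hT => by
    rw [card_union_of_disjoint
      (disjoint_of_subset_right (mem_powerset.mp hT) disjoint_sdiff), Nat.add_sub_cancel_left]
  rw [sum_Icc_eq_sum_powerset_sdiff h, sum_congr rfl fun T hT => by rw [hcard T hT]]
  have := congrArg (Int.cast : ℤ → R) (sum_powerset_neg_one_pow_card (x := A \ B))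
  push_cast at this
  rw [this]
  exact if_congr (sdiff_eq_empty_iff_subset.trans ⟨h.antisymm, fun hBA => hBA ▸ subset_rfl⟩)
    rfl rfl

theorem sum_Icc_prod_mul_prod_sdiff_one_sub {R : Type*} [CommRing R] (p : α → R)
    {B A : Finset α} (h : B ⊆ A) :
    ∑ T ∈ Icc B A, (∏ i ∈ T, p i) * ∏ i ∈ A \ T, (1 - p i) = ∏ i ∈ B, p i := by
  calc ∑ T ∈ Icc B A, (∏ i ∈ T, p i) * ∏ i ∈ A \ T, (1 - p i)
      = ∑ T ∈ (A \ B).powerset,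
          (∏ i ∈ B, p i) * ((∏ i ∈ T, p i) * ∏ i ∈ (A \ B) \ T, (1 - p i)) := by
        rw [sum_Icc_eq_sum_powerset_sdiff h]
        refine sum_congr rfl fun T hT => ?_
        rw [prod_union (disjoint_of_subset_right (mem_powerset.mp hT) disjoint_sdiff),
          sdiff_sdiff_left, sup_eq_union, mul_assoc]
    _ = (∏ i ∈ B, p i) * ∏ i ∈ A \ B, (p i + (1 - p i)) := by rw [← mul_sum, prod_add]
    _ = ∏ i ∈ B, p i := by simp

theorem sum_powerset_prod_mul_prod_sdiff_one_sub {R : Type*} [CommRing R] (p : α → R)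
    (A : Finset α) : ∑ T ∈ A.powerset, (∏ i ∈ T, p i) * ∏ i ∈ A \ T, (1 - p i) = 1 := by
  simpa [← Iic_eq_powerset, ← Icc_bot] using
    sum_Icc_prod_mul_prod_sdiff_one_sub p (empty_subset A)

end Finset

theorem sum_powerset_moebius {n : ℕ} (f : Finset (Fin n) → ℝ) (W : Finset (Fin n)) :
    ∑ T ∈ W.powerset, moebius f T = f W := by
  unfold moebius
  rw [sum_comm' (t' := W.powerset) (s' := fun R => Icc R W) fun T R => by
    simp only [mem_powerset, mem_Icc]; tauto]
  rw [sum_congr rfl fun R hR => by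
    rw [← sum_mul, sum_Icc_neg_one_pow_card_sub (mem_powerset.mp hR)]]
  simp

theorem sum_moebius_filter_inter_nonempty {n : ℕ} (f : Finset (Fin n) → ℝ) {S T : Finset (Fin n)}
    (hTS : Disjoint T S) :
    ∑ U ∈ (T ∪ S).powerset with (U ∩ S).Nonempty, moebius f U = f (T ∪ S) - f T := by
  have hrest : {U ∈ (T ∪ S).powerset | ¬(U ∩ S).Nonempty} = T.powerset := by
    ext U
    simp only [mem_filter, mem_powerset, not_nonempty_iff_eq_empty,
      ← disjoint_iff_inter_eq_empty]
    exact ⟨fun ⟨hU, hUS⟩ => hUS.left_le_of_le_sup_right hU,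
      fun hU => ⟨hU.trans subset_union_left, disjoint_of_subset_left hU hTS⟩⟩
  have := sum_filter_add_sum_filter_not (T ∪ S).powerset (fun U => (U ∩ S).Nonempty) (moebius f)
  rw [hrest, sum_powerset_moebius, sum_powerset_moebius] at this
  exact eq_sub_of_add_eq this

theorem pTS_eq_prod_mul_prod_sdiff {n : ℕ} (p : Fin n → ℝ) (S T : Finset (Fin n)) :
    pTS p S T = (∏ i ∈ T, p i) * ∏ i ∈ (univ \ S) \ T, (1 - p i) := by
  rw [pTS, sdiff_sdiff_left, sup_eq_union]

/-- `Φ_{B,p}(f,S) = Σ_{T⊆N∖S} p_T^S (f(T∪S) − f(T))`, where the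
coefficients `p_T^S` are nonnegative and sum to `1`. -/
theorem wBanzhafInfluence_is_generalized_value (n : ℕ) (p : Fin n → ℝ)
    (hp : ∀ i, p i ∈ Set.Ioo (0 : ℝ) 1) (f : Finset (Fin n) → ℝ) (S : Finset (Fin n)) :
    (wBanzhafInfluence p f S
        = ∑ T ∈ (univ \ S).powerset, pTS p S T * (f (T ∪ S) - f T))
    ∧ (∀ T ∈ (univ \ S).powerset, 0 ≤ pTS p S T)
    ∧ (∑ T ∈ (univ \ S).powerset, pTS p S T = 1) := by
  refine ⟨?_, fun T _ => ?_, ?_⟩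
  · calc wBanzhafInfluence p f S
        = ∑ U ∈ univ with (U ∩ S).Nonempty,
            ∑ T ∈ Icc (U \ S) (univ \ S), moebius f U * pTS p S T := by
          refine sum_congr rfl fun U _ => ?_
          simp_rw [← mul_sum, pTS_eq_prod_mul_prod_sdiff, sum_Icc_prod_mul_prod_sdiff_one_sub p
            (sdiff_subset_sdiff (subset_univ U) subset_rfl)]
      _ = ∑ T ∈ (univ \ S).powerset,
            ∑ U ∈ (T ∪ S).powerset with (U ∩ S).Nonempty, moebius f U * pTS p S T :=
          sum_comm' fun U T => by
            simp only [mem_filter, mem_univ, true_and, mem_Icc, mem_powerset, sdiff_le_iff']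
            tauto
      _ = ∑ T ∈ (univ \ S).powerset, pTS p S T * (f (T ∪ S) - f T) :=
          sum_congr rfl fun T hT => by
            rw [← sum_mul, sum_moebius_filter_inter_nonempty f
              (disjoint_of_subset_left (mem_powerset.mp hT) sdiff_disjoint), mul_comm]
  · exact mul_nonneg (prod_nonneg fun i _ => (hp i).1.le)
      (prod_nonneg fun i _ => sub_nonneg.mpr (hp i).2.le)
  · simp_rw [pTS_eq_prod_mul_prod_sdiff, sum_powerset_prod_mul_prod_sdiff_one_sub]
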